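/- Quantum asymptotic equipartition, probability part. Let ρ be a density operator on a finite-dimensional complex Hilbert space with spectral decomposition ρ = ∑_{x∈X} p(x)|x⟩⟨x|. Then there exists a function ε : ℕ → ℝ with ε(n) > 0 and lim_{n→∞} ε(n) = 0 such that for every n, tr[Π_{ε(n)}^{(n)} ρ^{⊗n}] ≥ 1 − ε(n), where Π_{ε(n)}^{(n)} is the ε(n)-typical projector of ρ^{⊗n}. -/

import Mathlib

open Matrix BigOperators Finset
open scoped ComplexOrder

noncomputable section

namespace QBC

/-- The rank-one projector (dyad) `|v⟩⟨v|` associated to a vector `v`. -/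
def dyad {ι : Type} [Fintype ι] (v : ι → ℂ) : Matrix ι ι ℂ :=
  Matrix.of fun i j => v i * star (v j)

/-- `v` is a unit vector (a pure state). -/
def IsUnitVec {ι : Type} [Fintype ι] (v : ι → ℂ) : Prop :=
  ∑ i, Complex.normSq (v i) = 1

/-- The standard maximally entangled state `(1/√|ι|) ∑ᵢ |ii⟩` between two copies of `ι`. -/
def maxEnt (ι : Type) [Fintype ι] [DecidableEq ι] : ι × ι → ℂ :=
  fun p => if p.1 = p.2 then ((Real.sqrt (Fintype.card ι) : ℂ))⁻¹ else 0

/-- `M` is an isometry matrix, i.e. `Mᴴ M = 1`. -/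
def IsIsometry {ι κ : Type} [Fintype ι] [Fintype κ] [DecidableEq κ] (M : Matrix ι κ ℂ) : Prop :=
  Mᴴ * M = 1

/-- The trace norm `‖M‖₁ = tr √(Mᴴ M)`. -/
def traceNorm {ι : Type} [Fintype ι] [DecidableEq ι] (M : Matrix ι ι ℂ) : ℝ :=
  (((Matrix.posSemidef_conjTranspose_mul_self M).1.eigenvectorUnitary : Matrix ι ι ℂ) *
    Matrix.diagonal (((↑) : ℝ → ℂ) ∘ Real.sqrt ∘ (Matrix.posSemidef_conjTranspose_mul_self M).1.eigenvalues) *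
    (star (Matrix.posSemidef_conjTranspose_mul_self M).1.eigenvectorUnitary : Matrix ι ι ℂ)).trace.re

/-- The purity `tr[ρ²]` (real part). -/
def purity {ι : Type} [Fintype ι] (ρ : Matrix ι ι ℂ) : ℝ :=
  (Matrix.trace (ρ * ρ)).re

/-- Partial trace over the second tensor factor. -/
def ptraceSnd {σ τ : Type} [Fintype σ] [Fintype τ] (M : Matrix (σ × τ) (σ × τ) ℂ) :
    Matrix σ σ ℂ :=
  Matrix.of fun i j => ∑ k, M (i, k) (j, k)

/-- Partial trace over the first tensor factor. -/
def ptraceFst {σ τ : Type} [Fintype σ] [Fintype τ] (M : Matrix (σ × τ) (σ × τ) ℂ) :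
    Matrix τ τ ℂ :=
  Matrix.of fun i j => ∑ k, M (k, i) (k, j)

/-- The von Neumann entropy (base 2), via the eigenvalues of a Hermitian matrix. -/
def entropy {ι : Type} [Fintype ι] [DecidableEq ι] (ρ : Matrix ι ι ℂ) : ℝ :=
  if h : ρ.IsHermitian then -∑ i, h.eigenvalues i * Real.logb 2 (h.eigenvalues i) else 0

/-- Quantum mutual information `I(σ;τ) = H(σ) + H(τ) - H(στ)` of a bipartite state. -/
def mutualInfo {σ τ : Type} [Fintype σ] [Fintype τ] [DecidableEq σ] [DecidableEq τ]
    (ρ : Matrix (σ × τ) (σ × τ) ℂ) : ℝ :=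
  entropy (ptraceSnd ρ) + entropy (ptraceFst ρ) - entropy ρ

/-- Coherent information `I(σ⟩τ) = H(τ) - H(στ)` of a bipartite state. -/
def cohInfo {σ τ : Type} [Fintype σ] [Fintype τ] [DecidableEq σ] [DecidableEq τ]
    (ρ : Matrix (σ × τ) (σ × τ) ℂ) : ℝ :=
  entropy (ptraceFst ρ) - entropy ρ

/-- A density operator: positive semidefinite with unit trace. -/
def IsDensity {ι : Type} [Fintype ι] (ρ : Matrix ι ι ℂ) : Prop :=
  ρ.PosSemidef ∧ ρ.trace = 1

end QBC
open scoped Classical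

open QBC

namespace QBC

variable {ι : Type} [Fintype ι] [DecidableEq ι]

/-- Shannon entropy (base 2) of a probability vector. -/
def shannonEntropy (p : ι → ℝ) : ℝ := -∑ x, p x * Real.logb 2 (p x)

/-- The product basis vector `|x₁⟩ ⊗ ⋯ ⊗ |x_n⟩` built from an eigenbasis `e`. -/
def basisVec (e : ι → ι → ℂ) (n : ℕ) (xs : Fin n → ι) : (Fin n → ι) → ℂ :=
  fun f => ∏ i, e (xs i) (f i)

/-- Whether the sequence `xs` is `ε`-typical for the eigenvalue distribution `p`. -/
def IsTypical (p : ι → ℝ) (ε : ℝ) {n : ℕ} (xs : Fin n → ι) : Prop :=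
  |(-(1 / (n : ℝ)) * Real.logb 2 (∏ i, p (xs i))) - shannonEntropy p| ≤ ε

/-- The `ε`-typical projector `Π_ε^{(n)} = ∑_{xⁿ ∈ T_ε^{(n)}} |x₁⟩⟨x₁| ⊗ ⋯ ⊗ |x_n⟩⟨x_n|`. -/
noncomputable def typicalProj (e : ι → ι → ℂ) (p : ι → ℝ) (ε : ℝ) (n : ℕ) :
    Matrix (Fin n → ι) (Fin n → ι) ℂ :=
  ∑ xs : Fin n → ι,
    if IsTypical p ε xs then dyad (basisVec e n xs) else 0

/-- The `n`-fold tensor power `ρ^{⊗n}` (Kronecker power), entrywise. -/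
def tensorPow (ρ : Matrix ι ι ℂ) (n : ℕ) : Matrix (Fin n → ι) (Fin n → ι) ℂ :=
  Matrix.of fun f g => ∏ i, ρ (f i) (g i)

end QBC


/-!
In the eigenbasis of `ρ`, the trace `tr[Π_ε^{(n)} ρ^{⊗n}]` is the `pⁿ`-probability of the
classical typical set. On a sequence of positive probability, `-(1/n) log₂ pⁿ(xⁿ) - H(ρ)` is the
empirical mean of the i.i.d. centred surprisals `-log₂ p(xᵢ) - H(ρ)`, whose variance is the
varentropy `σ²`; Chebyshev's inequality bounds the atypical mass by `σ² / (n ε²)`. Taking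
`ε(n)` of order `(σ² / n)^{1/3}` makes this at most `ε(n)`.
-/

namespace QBC

open Filter Topology

section Trace

variable {ι : Type} [Fintype ι]

theorem trace_dyad_mul_dyad (u v : ι → ℂ) :
    (dyad u * dyad v).trace = (∑ i, star (v i) * u i) * ∑ i, star (u i) * v i := by
  simp only [trace, Matrix.diag, mul_apply, dyad, of_apply, sum_mul_sum]
  exact sum_congr rfl fun a _ => sum_congr rfl fun b _ => by ring

theorem trace_dyad_mul_of_spectral [DecidableEq ι] {ρ : Matrix ι ι ℂ} {e : ι → ι → ℂ}
    {p : ι → ℝ} (hON : ∀ x y, (∑ i, star (e x i) * e y i) = if x = y then (1 : ℂ) else 0)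
    (hspec : ρ = ∑ x, (p x : ℂ) • dyad (e x)) (x : ι) :
    (dyad (e x) * ρ).trace = p x := by
  simp_rw [hspec, mul_sum, trace_sum, mul_smul_comm, trace_smul, trace_dyad_mul_dyad, hON]
  simp

theorem trace_dyad_basisVec_mul_tensorPow (e : ι → ι → ℂ) (ρ : Matrix ι ι ℂ) (n : ℕ)
    (xs : Fin n → ι) :
    (dyad (basisVec e n xs) * tensorPow ρ n).trace = ∏ i, (dyad (e (xs i)) * ρ).trace := by
  simp only [trace, Matrix.diag, mul_apply, dyad, basisVec, tensorPow, of_apply, star_prod,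
    Fintype.prod_sum, ← prod_mul_distrib]

theorem re_trace_typicalProj_mul_tensorPow [DecidableEq ι] {ρ : Matrix ι ι ℂ}
    {e : ι → ι → ℂ} {p : ι → ℝ}
    (hON : ∀ x y, (∑ i, star (e x i) * e y i) = if x = y then (1 : ℂ) else 0)
    (hspec : ρ = ∑ x, (p x : ℂ) • dyad (e x)) (ε : ℝ) (n : ℕ) :
    (typicalProj e p ε n * tensorPow ρ n).trace.re
      = ∑ xs : Fin n → ι with IsTypical p ε xs, ∏ i, p (xs i) := by
  rw [typicalProj, sum_mul, trace_sum, Complex.re_sum, sum_filter]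
  refine sum_congr rfl fun xs _ => ?_
  split_ifs
  · simp [trace_dyad_basisVec_mul_tensorPow, trace_dyad_mul_of_spectral hON hspec,
      ← Complex.ofReal_prod]
  · simp

end Trace

section ProductWeights

variable {ι κ : Type*} [Fintype ι] [Fintype κ] [DecidableEq κ] {p g : ι → ℝ}

theorem sum_prod_mul_prod (p : ι → ℝ) (f : κ → ι → ℝ) :
    ∑ xs : κ → ι, (∏ k, p (xs k)) * ∏ k, f k (xs k) = ∏ k, ∑ a, p a * f k a := by
  simp_rw [← prod_mul_distrib, Fintype.prod_sum]

theorem sum_prod_eq_one (hp1 : ∑ x, p x = 1) : ∑ xs : κ → ι, ∏ k, p (xs k) = 1 := by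
  simpa [hp1] using sum_prod_mul_prod (κ := κ) p fun _ _ => 1

theorem sum_prod_mul_mul (hp1 : ∑ x, p x = 1) (hg0 : ∑ x, p x * g x = 0) (i j : κ) :
    ∑ xs : κ → ι, (∏ k, p (xs k)) * (g (xs i) * g (xs j))
      = if i = j then ∑ a, p a * g a ^ 2 else 0 := by
  have hprod : ∀ xs : κ → ι, g (xs i) * g (xs j)
      = ∏ k, (if k = i then g (xs k) else 1) * (if k = j then g (xs k) else 1) := fun xs => by
    rw [prod_mul_distrib, prod_ite_eq' univ i, prod_ite_eq' univ j]
    simp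
  simp_rw [hprod]
  rw [sum_prod_mul_prod p fun k x => (if k = i then g x else 1) * (if k = j then g x else 1)]
  split_ifs with hij
  · subst hij
    rw [prod_eq_single i (fun k _ hk => by simp [hk, hp1]) (by simp)]
    simp [sq]
  · exact prod_eq_zero (mem_univ i) (by simp [hij, hg0])

theorem sum_prod_mul_sum_sq (hp1 : ∑ x, p x = 1) (hg0 : ∑ x, p x * g x = 0) :
    ∑ xs : κ → ι, (∏ k, p (xs k)) * (∑ k, g (xs k)) ^ 2
      = Fintype.card κ * ∑ a, p a * g a ^ 2 := by
  simp_rw [sq, sum_mul_sum, mul_sum]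
  rw [sum_comm]
  simp_rw [sum_comm (γ := κ → ι), sum_prod_mul_mul hp1 hg0, sum_ite_eq, if_pos (mem_univ _),
    sum_const, card_univ, nsmul_eq_mul, mul_sum, sq]

end ProductWeights

theorem sum_le_sum_mul_sq_div {α : Type*} [Fintype α] (s : Finset α) {w Y : α → ℝ} {t : ℝ}
    (hw : ∀ x, 0 ≤ w x) (ht : 0 < t) (hs : ∀ x ∈ s, w x ≠ 0 → t ≤ |Y x|) :
    ∑ x ∈ s, w x ≤ (∑ x, w x * Y x ^ 2) / t ^ 2 := by
  rw [sum_div]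
  calc ∑ x ∈ s, w x ≤ ∑ x ∈ s, w x * Y x ^ 2 / t ^ 2 := by
        refine sum_le_sum fun x hx => ?_
        rcases eq_or_ne (w x) 0 with hwx | hwx
        · simp [hwx]
        · have : t ^ 2 ≤ Y x ^ 2 := sq_le_sq.2 (by rw [abs_of_pos ht]; exact hs x hx hwx)
          rw [mul_div_assoc]
          exact le_mul_of_one_le_right (hw x) ((one_le_div (by positivity)).2 this)
    _ ≤ ∑ x, w x * Y x ^ 2 / t ^ 2 :=
        sum_le_sum_of_subset_of_nonneg (subset_univ s) fun x _ _ => by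
          have := hw x; positivity

section Typical

variable {ι : Type} [Fintype ι] {p : ι → ℝ}

def centeredSurprisal (p : ι → ℝ) (x : ι) : ℝ := -Real.logb 2 (p x) - shannonEntropy p

def varentropy (p : ι → ℝ) : ℝ := ∑ x, p x * centeredSurprisal p x ^ 2

theorem varentropy_nonneg (hp0 : ∀ x, 0 ≤ p x) : 0 ≤ varentropy p :=
  sum_nonneg fun x _ => mul_nonneg (hp0 x) (sq_nonneg _)

theorem sum_mul_centeredSurprisal (hp1 : ∑ x, p x = 1) : ∑ x, p x * centeredSurprisal p x = 0 := by
  simp only [centeredSurprisal, shannonEntropy, mul_sub, sum_sub_distrib, ← sum_mul, hp1]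
  simp

theorem isTypical_iff {ε : ℝ} {n : ℕ} (hn : n ≠ 0) {xs : Fin n → ι}
    (hxs : ∀ i, p (xs i) ≠ 0) :
    IsTypical p ε xs ↔ |∑ i, centeredSurprisal p (xs i)| ≤ n * ε := by
  have hn' : (0 : ℝ) < n := by positivity
  have : -(1 / (n : ℝ)) * Real.logb 2 (∏ i, p (xs i)) - shannonEntropy p
      = (∑ i, centeredSurprisal p (xs i)) / n := by
    rw [Real.logb_prod _ _ fun i _ => hxs i]
    simp only [centeredSurprisal, sum_sub_distrib, sum_neg_distrib, sum_const, card_univ,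
      Fintype.card_fin, nsmul_eq_mul]
    field_simp
  rw [IsTypical, this, abs_div, abs_of_pos hn', div_le_iff₀ hn', mul_comm]

theorem sum_not_isTypical_le (hp0 : ∀ x, 0 ≤ p x) (hp1 : ∑ x, p x = 1) {ε : ℝ} (hε : 0 < ε)
    {n : ℕ} (hn : n ≠ 0) :
    ∑ xs : Fin n → ι with ¬IsTypical p ε xs, ∏ i, p (xs i) ≤ varentropy p / (n * ε ^ 2) := by
  calc ∑ xs : Fin n → ι with ¬IsTypical p ε xs, ∏ i, p (xs i)
      ≤ (∑ xs : Fin n → ι, (∏ i, p (xs i)) * (∑ i, centeredSurprisal p (xs i)) ^ 2)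
          / (n * ε) ^ 2 := by
        refine sum_le_sum_mul_sq_div _ (fun xs => prod_nonneg fun i _ => hp0 (xs i))
          (by positivity) fun xs hxs hne => ?_
        have hxs_ne : ∀ i, p (xs i) ≠ 0 := fun i => prod_ne_zero_iff.1 hne i (mem_univ i)
        rw [mem_filter, isTypical_iff hn hxs_ne] at hxs
        exact (not_le.1 hxs.2).le
    _ = varentropy p / (n * ε ^ 2) := by
        rw [sum_prod_mul_sum_sq hp1 (sum_mul_centeredSurprisal hp1), Fintype.card_fin, varentropy]
        field_simp

theorem one_sub_varentropy_div_le_sum_isTypical (hp0 : ∀ x, 0 ≤ p x) (hp1 : ∑ x, p x = 1)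
    {ε : ℝ} (hε : 0 < ε) {n : ℕ} (hn : n ≠ 0) :
    1 - varentropy p / (n * ε ^ 2)
      ≤ ∑ xs : Fin n → ι with IsTypical p ε xs, ∏ i, p (xs i) := by
  have hsplit := sum_filter_add_sum_filter_not univ (IsTypical p ε) fun xs : Fin n → ι =>
    ∏ i, p (xs i)
  rw [sum_prod_eq_one hp1] at hsplit
  linarith [sum_not_isTypical_le hp0 hp1 hε hn]

end Typical

theorem exists_tendsto_zero_le_succ_mul_pow_three {C : ℝ} (hC : 0 < C) :
    ∃ ε : ℕ → ℝ, (∀ n, 0 < ε n) ∧ Tendsto ε atTop (𝓝 0) ∧ ∀ n : ℕ, C ≤ (n + 1) * ε n ^ 3 := by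
  refine ⟨fun n => (C / (n + 1)) ^ (3⁻¹ : ℝ), fun n => by positivity, ?_, fun n => ?_⟩
  · have hbase : Tendsto (fun n : ℕ => C / ((n : ℝ) + 1)) atTop (𝓝 0) := by
      simpa [Function.comp_def] using
        (tendsto_const_div_atTop_nhds_zero_nat C).comp (tendsto_add_atTop_nat 1)
    simpa using hbase.rpow_const (Or.inr (by norm_num : (0 : ℝ) ≤ 3⁻¹))
  · have hcube : ((C / (n + 1)) ^ (3⁻¹ : ℝ)) ^ 3 = C / (n + 1) := by
      simpa using Real.rpow_inv_natCast_pow (n := 3) (by positivity : 0 ≤ C / (n + 1))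
        three_ne_zero
    rw [hcube, mul_div_cancel₀ _ (by positivity)]

end QBC

theorem typical_subspace_probability_general
    {ι : Type} [Fintype ι] [DecidableEq ι]
    (ρ : Matrix ι ι ℂ)
    (e : ι → ι → ℂ) (p : ι → ℝ)
    (hON : ∀ x y, (∑ i, star (e x i) * e y i) = if x = y then (1 : ℂ) else 0)
    (hp0 : ∀ x, 0 ≤ p x) (hp1 : ∑ x, p x = 1)
    (hspec : ρ = ∑ x, (p x : ℂ) • QBC.dyad (e x)) :
    ∃ ε : ℕ → ℝ, (∀ n, 0 < ε n) ∧ Filter.Tendsto ε Filter.atTop (nhds 0) ∧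
      ∀ n, 1 - ε n ≤ (Matrix.trace (QBC.typicalProj e p (ε n) n * QBC.tensorPow ρ n)).re := by
  have hV := varentropy_nonneg hp0
  obtain ⟨ε, hε, hlim, hcube⟩ :=
    exists_tendsto_zero_le_succ_mul_pow_three (C := 2 * varentropy p + 1) (by positivity)
  refine ⟨ε, hε, hlim, fun n => ?_⟩
  rw [re_trace_typicalProj_mul_tensorPow hON hspec]
  rcases Nat.eq_zero_or_pos n with rfl | hn
  · have h0 := hcube 0
    rw [Nat.cast_zero, zero_add, one_mul] at h0
    have : 1 ≤ ε 0 := (one_le_pow_iff_of_nonneg (hε 0).le three_ne_zero).1 (by linarith)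
    exact (sub_nonpos.2 this).trans (sum_nonneg fun xs _ => prod_nonneg fun i _ => hp0 (xs i))
  · refine le_trans ?_ (one_sub_varentropy_div_le_sum_isTypical hp0 hp1 (hε n) hn.ne')
    have hn1 : (1 : ℝ) ≤ n := by exact_mod_cast hn
    have : varentropy p ≤ ε n * (n * ε n ^ 2) := by
      nlinarith [hcube n, pow_pos (hε n) 3]
    linarith [div_le_of_le_mul₀ (by positivity) (hε n).le this]

/-- quantum AEP, probability part. There is a sequence `ε(n) > 0`
tending to `0` such that `tr[Π_{ε(n)}^{(n)} ρ^{⊗n}] ≥ 1 − ε(n)` for every `n`. -/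
theorem typical_subspace_probability
    {ι : Type} [Fintype ι] [DecidableEq ι]
    (ρ : Matrix ι ι ℂ) (hρden : QBC.IsDensity ρ)
    (e : ι → ι → ℂ) (p : ι → ℝ)
    (hON : ∀ x y, (∑ i, star (e x i) * e y i) = if x = y then (1 : ℂ) else 0)
    (hp0 : ∀ x, 0 ≤ p x) (hp1 : ∑ x, p x = 1)
    (hspec : ρ = ∑ x, (p x : ℂ) • QBC.dyad (e x)) :
    ∃ ε : ℕ → ℝ, (∀ n, 0 < ε n) ∧ Filter.Tendsto ε Filter.atTop (nhds 0) ∧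
      ∀ n, 1 - ε n ≤ (Matrix.trace (QBC.typicalProj e p (ε n) n * QBC.tensorPow ρ n)).re :=
  typical_subspace_probability_general ρ e p hON hp0 hp1 hspec
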